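/- Work over the field ℚ with two distinct letters a ≠ b of a finite alphabet A. For a word u, let u̲ denote its characteristic series (⟨u̲|w⟩ = 1 if w = u, 0 otherwise). Then: (1) the rank of the shuffle product (a^{n-1})̲ ⧢ (b^{m-1})̲ equals nm, so the dimension bound nm for the shuffle of representations of dimensions n and m is sharp; (2) for all n, m ≥ 0, the infiltration product equals the shuffle product on these series: (a^n)̲ ↑ (b^m)̲ = (a^n)̲ ⧢ (b^m)̲, so the bound nm is sharp for the infiltration product as well. -/

import Mathlib

open Matrix

/-- The matrix of a word: extend the letter matrices `μ` multiplicatively. -/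
def wordMat {A : Type*} {d : ℕ}
    (μ : A → Matrix (Fin d) (Fin d) ℚ) (w : List A) : Matrix (Fin d) (Fin d) ℚ :=
  (w.map μ).prod

/-- A series admits a linear representation of dimension `d`. -/
def hasRep {A : Type*} (S : List A → ℚ) (d : ℕ) : Prop :=
  ∃ (lam : Fin d → ℚ) (μ : A → Matrix (Fin d) (Fin d) ℚ) (gam : Fin d → ℚ),
    ∀ w, S w = lam ⬝ᵥ (wordMat μ w *ᵥ gam)

/-- The rank of a series: the minimal dimension of a linear representation. -/
noncomputable def rankSer {A : Type*} (S : List A → ℚ) : ℕ := sInf {d | hasRep S d}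

/-- The characteristic series of a word `u`. -/
def charSer {A : Type*} [DecidableEq A] (u : List A) : List A → ℚ :=
  fun w => if w = u then 1 else 0

/-- The subword `w[I]` of `w` in the positions belonging to `I`, in order. -/
def subword {A : Type*} (w : List A) (I : Finset (Fin w.length)) : List A :=
  ((List.finRange w.length).filter (fun i => i ∈ I)).map w.get

/-- The shuffle product of two series (sum over ordered pairs of disjoint
complementary sets of positions). -/
def shuffleSer {A : Type*} (R S : List A → ℚ) : List A → ℚ :=
  fun w =>
    ∑ p ∈ Finset.univ.filter
        (fun p : Finset (Fin w.length) × Finset (Fin w.length) =>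
          p.1 ∩ p.2 = ∅ ∧ p.1 ∪ p.2 = Finset.univ),
      R (subword w p.1) * S (subword w p.2)

/-- The infiltration product of two series (sum over ordered pairs of sets of
positions with full union, overlaps allowed). -/
def inflSer {A : Type*} (R S : List A → ℚ) : List A → ℚ :=
  fun w =>
    ∑ p ∈ Finset.univ.filter
        (fun p : Finset (Fin w.length) × Finset (Fin w.length) =>
          p.1 ∪ p.2 = Finset.univ),
      R (subword w p.1) * S (subword w p.2)

lemma length_subword {A : Type*} (w : List A) (I : Finset (Fin w.length)) :
    (subword w I).length = I.card := by
  have : ((List.finRange w.length).filter (fun i => i ∈ I)).length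
      = (Finset.univ.filter (fun i => i ∈ I)).card := rfl
  simp [subword, this, Finset.filter_univ_mem]

lemma mem_subword {A : Type*} {w : List A} {I : Finset (Fin w.length)} {x : A} :
    x ∈ subword w I ↔ ∃ i ∈ I, w.get i = x := by
  simp [subword, List.mem_filter]

lemma subword_eq_replicate {A : Type*} {w : List A} {I : Finset (Fin w.length)}
    {k : ℕ} {c : A} :
    subword w I = List.replicate k c ↔ I.card = k ∧ ∀ i ∈ I, w.get i = c := by
  rw [List.eq_replicate_iff, length_subword]
  constructor
  · rintro ⟨h1, h2⟩
    exact ⟨h1, fun i hi => h2 _ (mem_subword.2 ⟨i, hi, rfl⟩)⟩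
  · rintro ⟨h1, h2⟩
    refine ⟨h1, fun x hx => ?_⟩
    obtain ⟨i, hi, rfl⟩ := mem_subword.1 hx
    exact h2 i hi

lemma count_eq_card {A : Type*} [DecidableEq A] (w : List A) (c : A) :
    w.count c = (Finset.univ.filter fun i : Fin w.length => w.get i = c).card := by
  have : ((List.finRange w.length).filter (fun i => w.get i = c)).length
      = (Finset.univ.filter (fun i => w.get i = c)).card := rfl
  rw [← this]
  conv_lhs => rw [← List.map_get_finRange w]
  rw [List.count_eq_countP, List.countP_map, List.countP_eq_length_filter]
  congr!

lemma shuffleChar {A : Type*} [DecidableEq A] {a b : A} (hab : a ≠ b) (n m : ℕ)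
    (w : List A) :
    shuffleSer (charSer (List.replicate n a)) (charSer (List.replicate m b)) w =
      if w.count a = n ∧ w.count b = m ∧ ∀ x ∈ w, x = a ∨ x = b then 1 else 0 := by
  classical
  set Ia : Finset (Fin w.length) := Finset.univ.filter (fun i => w.get i = a) with hIa
  set Ib : Finset (Fin w.length) := Finset.univ.filter (fun i => w.get i = b) with hIb
  have key : ∀ p : Finset (Fin w.length) × Finset (Fin w.length),
      ((p.1 ∩ p.2 = ∅ ∧ p.1 ∪ p.2 = Finset.univ) ∧
        (subword w p.1 = List.replicate n a ∧ subword w p.2 = List.replicate m b)) ↔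
      ((w.count a = n ∧ w.count b = m ∧ ∀ x ∈ w, x = a ∨ x = b) ∧ p = (Ia, Ib)) := by
    intro p
    constructor
    · rintro ⟨⟨hint, hun⟩, hsa, hsb⟩
      obtain ⟨hc1, hg1⟩ := subword_eq_replicate.1 hsa
      obtain ⟨hc2, hg2⟩ := subword_eq_replicate.1 hsb
      have hmem : ∀ i : Fin w.length, i ∈ p.1 ∨ i ∈ p.2 := by
        intro i
        have : i ∈ p.1 ∪ p.2 := by rw [hun]; exact Finset.mem_univ i
        exact Finset.mem_union.1 this
      have hp1 : p.1 = Ia := by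
        ext i
        simp only [hIa, Finset.mem_filter, Finset.mem_univ, true_and]
        constructor
        · exact hg1 i
        · intro hgi
          rcases hmem i with h | h
          · exact h
          · exact absurd (hgi.symm.trans (hg2 i h)) hab
      have hp2 : p.2 = Ib := by
        ext i
        simp only [hIb, Finset.mem_filter, Finset.mem_univ, true_and]
        constructor
        · exact hg2 i
        · intro hgi
          rcases hmem i with h | h
          · exact absurd ((hg1 i h).symm.trans hgi) hab
          · exact h
      refine ⟨⟨?_, ?_, ?_⟩, Prod.ext hp1 hp2⟩
      · rw [count_eq_card, ← hIa, ← hp1, hc1]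
      · rw [count_eq_card, ← hIb, ← hp2, hc2]
      · intro x hx
        obtain ⟨i, rfl⟩ := List.mem_iff_get.1 hx
        rcases hmem i with h | h
        · exact Or.inl (hg1 i h)
        · exact Or.inr (hg2 i h)
    · rintro ⟨⟨hca, hcb, hob⟩, rfl⟩
      refine ⟨⟨?_, ?_⟩, ?_, ?_⟩
      · ext i
        simp only [hIa, hIb, Finset.mem_inter, Finset.mem_filter, Finset.mem_univ,
          true_and, Finset.notMem_empty, iff_false, not_and]
        intro h1 h2
        exact hab (h1 ▸ h2)
      · ext i
        simp only [Finset.mem_union, hIa, hIb, Finset.mem_filter, Finset.mem_univ,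
          true_and, iff_true]
        exact hob _ (List.get_mem w i)
      · exact subword_eq_replicate.2 ⟨by rw [← count_eq_card, hca],
          fun i hi => (Finset.mem_filter.1 hi).2⟩
      · exact subword_eq_replicate.2 ⟨by rw [← count_eq_card, hcb],
          fun i hi => (Finset.mem_filter.1 hi).2⟩
  unfold shuffleSer charSer
  rw [Finset.sum_filter]
  have hterm : ∀ p : Finset (Fin w.length) × Finset (Fin w.length),
      (if p.1 ∩ p.2 = ∅ ∧ p.1 ∪ p.2 = Finset.univ then
        (if subword w p.1 = List.replicate n a then (1:ℚ) else 0) *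
        (if subword w p.2 = List.replicate m b then (1:ℚ) else 0) else 0) =
      if ((w.count a = n ∧ w.count b = m ∧ ∀ x ∈ w, x = a ∨ x = b) ∧ p = (Ia, Ib))
        then 1 else 0 := by
    intro p
    have step : (if p.1 ∩ p.2 = ∅ ∧ p.1 ∪ p.2 = Finset.univ then
        (if subword w p.1 = List.replicate n a then (1:ℚ) else 0) *
        (if subword w p.2 = List.replicate m b then (1:ℚ) else 0) else 0) =
      if ((p.1 ∩ p.2 = ∅ ∧ p.1 ∪ p.2 = Finset.univ) ∧
          (subword w p.1 = List.replicate n a ∧ subword w p.2 = List.replicate m b))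
        then 1 else 0 := by
      by_cases h1 : p.1 ∩ p.2 = ∅ ∧ p.1 ∪ p.2 = Finset.univ <;>
        by_cases h2 : subword w p.1 = List.replicate n a <;>
          by_cases h3 : subword w p.2 = List.replicate m b <;>
            simp [h1, h2, h3]
    rw [step]
    exact if_congr (key p) rfl rfl
  simp_rw [hterm]
  by_cases hcond : w.count a = n ∧ w.count b = m ∧ ∀ x ∈ w, x = a ∨ x = b
  · have hc : ((w.count a = n ∧ w.count b = m ∧ ∀ x ∈ w, x = a ∨ x = b)) = True :=
      eq_true hcond
    simp only [hc, true_and, if_true]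
    rw [Finset.sum_ite_eq' Finset.univ ((Ia, Ib) : Finset (Fin w.length) × Finset (Fin w.length)) (fun _ => (1:ℚ))]
    simp
  · simp only [hcond, false_and, if_false, Finset.sum_const_zero]

lemma infl_eq_shuffle {A : Type*} [DecidableEq A] {a b : A} (hab : a ≠ b) (n m : ℕ) :
    inflSer (charSer (List.replicate n a)) (charSer (List.replicate m b))
      = shuffleSer (charSer (List.replicate n a)) (charSer (List.replicate m b)) := by
  funext w
  unfold inflSer shuffleSer
  refine (Finset.sum_subset ?_ ?_).symm
  · intro p hp
    rw [Finset.mem_filter] at hp ⊢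
    exact ⟨hp.1, hp.2.2⟩
  intro p hp hnp
  have hun : p.1 ∪ p.2 = Finset.univ := (Finset.mem_filter.1 hp).2
  have hint : p.1 ∩ p.2 ≠ ∅ := by
    intro h
    exact hnp (Finset.mem_filter.2 ⟨Finset.mem_univ _, h, hun⟩)
  unfold charSer
  by_cases h2 : subword w p.1 = List.replicate n a
  · by_cases h3 : subword w p.2 = List.replicate m b
    · obtain ⟨i, hi⟩ := Finset.nonempty_iff_ne_empty.2 hint
      obtain ⟨hi1, hi2⟩ := Finset.mem_inter.1 hi
      have ha := (subword_eq_replicate.1 h2).2 i hi1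
      have hb := (subword_eq_replicate.1 h3).2 i hi2
      exact absurd (ha ▸ hb) hab
    · simp [h3]
  · simp [h2]

section Upper
variable {A : Type*} [DecidableEq A]

/-- Letter matrices for the shuffle representation. -/
def repMu (a b : A) (nn mm : ℕ) :
    A → Matrix (Fin (nn+1) × Fin (mm+1)) (Fin (nn+1) × Fin (mm+1)) ℚ :=
  fun c p q =>
    if c = a then (if (q.1 : ℕ) = (p.1 : ℕ) + 1 ∧ q.2 = p.2 then 1 else 0)
    else if c = b then (if (q.2 : ℕ) = (p.2 : ℕ) + 1 ∧ q.1 = p.1 then 1 else 0)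
    else 0

def vvec (a b : A) (nn mm : ℕ) (w : List A) : Fin (nn+1) × Fin (mm+1) → ℚ :=
  fun q => if w.count a = (q.1 : ℕ) ∧ w.count b = (q.2 : ℕ) ∧ ∀ x ∈ w, x = a ∨ x = b
    then 1 else 0

lemma vvec_apply_eq_zero {a b : A} {nn mm : ℕ} {w : List A}
    {p : Fin (nn+1) × Fin (mm+1)}
    (h : ¬(w.count a = (p.1 : ℕ) ∧ w.count b = (p.2 : ℕ) ∧ ∀ x ∈ w, x = a ∨ x = b)) :
    vvec a b nn mm w p = 0 := by
  unfold vvec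
  rw [if_neg h]

lemma key_upper {a b : A} (hab : a ≠ b) (nn mm : ℕ) (w : List A) :
    vvec a b nn mm [] ᵥ* (w.map (repMu a b nn mm)).prod = vvec a b nn mm w := by
  induction w using List.reverseRecOn with
  | nil => simp [Matrix.vecMul_one]
  | append_singleton w c ih =>
    rw [List.map_append, List.prod_append, List.map_singleton, List.prod_singleton,
      ← Matrix.vecMul_vecMul, ih]
    funext q
    show ∑ p, vvec a b nn mm w p * repMu a b nn mm c p q = vvec a b nn mm (w ++ [c]) q
    by_cases hca : c = a
    · rw [hca]
      have hcnta : (w ++ [a]).count a = w.count a + 1 := by simp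
      have hcntb : (w ++ [a]).count b = w.count b := by
        simp [List.count_append, List.count_singleton', hab.symm, hab]
      have hful : (∀ x ∈ w ++ [a], x = a ∨ x = b) ↔ (∀ x ∈ w, x = a ∨ x = b) := by
        simp only [List.mem_append, List.mem_singleton]
        constructor
        · exact fun h x hx => h x (Or.inl hx)
        · rintro h x (hx | rfl)
          · exact h x hx
          · exact Or.inl rfl
      have hrhs : vvec a b nn mm (w ++ [a]) q =
          if w.count a + 1 = (q.1 : ℕ) ∧ w.count b = (q.2 : ℕ) ∧ ∀ x ∈ w, x = a ∨ x = b
            then 1 else 0 := by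
        unfold vvec
        rw [hcnta, hcntb]
        exact if_congr (and_congr Iff.rfl (and_congr Iff.rfl hful)) rfl rfl
      rw [hrhs]
      by_cases hT : w.count a + 1 = (q.1 : ℕ) ∧ w.count b = (q.2 : ℕ) ∧
          ∀ x ∈ w, x = a ∨ x = b
      · obtain ⟨h1, h2, h3⟩ := hT
        have hlt1 : w.count a < nn + 1 := by have := q.1.isLt; omega
        rw [if_pos ⟨h1, h2, h3⟩]
        rw [Finset.sum_eq_single ((⟨w.count a, hlt1⟩, q.2) : Fin (nn+1) × Fin (mm+1))]
        · have e1 : vvec a b nn mm w (⟨w.count a, hlt1⟩, q.2) = 1 := by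
            unfold vvec
            exact if_pos ⟨rfl, h2, h3⟩
          have e2 : repMu a b nn mm a (⟨w.count a, hlt1⟩, q.2) q = 1 := by
            unfold repMu
            rw [if_pos rfl, if_pos ⟨h1.symm, rfl⟩]
          rw [e1, e2]
          norm_num
        · intro p _ hne
          by_cases hv : w.count a = (p.1 : ℕ) ∧ w.count b = (p.2 : ℕ) ∧
              ∀ x ∈ w, x = a ∨ x = b
          · by_cases hd : (q.1 : ℕ) = (p.1 : ℕ) + 1 ∧ q.2 = p.2
            · exact absurd (show p = ((⟨w.count a, hlt1⟩, q.2) : Fin (nn+1) × Fin (mm+1)) from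
                Prod.ext_iff.2 ⟨Fin.ext (by simpa using hv.1.symm), hd.2.symm⟩) hne
            · have e2 : repMu a b nn mm a p q = 0 := by
                unfold repMu
                rw [if_pos rfl, if_neg hd]
              rw [e2, mul_zero]
          · rw [vvec_apply_eq_zero hv, zero_mul]
        · intro h
          exact absurd (Finset.mem_univ _) h
      · rw [if_neg hT]
        apply Finset.sum_eq_zero
        intro p _
        by_cases hv : w.count a = (p.1 : ℕ) ∧ w.count b = (p.2 : ℕ) ∧
            ∀ x ∈ w, x = a ∨ x = b
        · by_cases hd : (q.1 : ℕ) = (p.1 : ℕ) + 1 ∧ q.2 = p.2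
          · refine absurd ⟨by omega, ?_, hv.2.2⟩ hT
            rw [hv.2.1, hd.2]
          · have e2 : repMu a b nn mm a p q = 0 := by
              unfold repMu
              rw [if_pos rfl, if_neg hd]
            rw [e2, mul_zero]
        · rw [vvec_apply_eq_zero hv, zero_mul]
    · by_cases hcb : c = b
      · rw [hcb]
        have hcnta : (w ++ [b]).count a = w.count a := by
          simp [List.count_append, List.count_singleton', hab, hab.symm]
        have hcntb : (w ++ [b]).count b = w.count b + 1 := by simp
        have hful : (∀ x ∈ w ++ [b], x = a ∨ x = b) ↔ (∀ x ∈ w, x = a ∨ x = b) := by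
          simp only [List.mem_append, List.mem_singleton]
          constructor
          · exact fun h x hx => h x (Or.inl hx)
          · rintro h x (hx | rfl)
            · exact h x hx
            · exact Or.inr rfl
        have hrhs : vvec a b nn mm (w ++ [b]) q =
            if w.count a = (q.1 : ℕ) ∧ w.count b + 1 = (q.2 : ℕ) ∧ ∀ x ∈ w, x = a ∨ x = b
              then 1 else 0 := by
          unfold vvec
          rw [hcnta, hcntb]
          exact if_congr (and_congr Iff.rfl (and_congr Iff.rfl hful)) rfl rfl
        rw [hrhs]
        by_cases hT : w.count a = (q.1 : ℕ) ∧ w.count b + 1 = (q.2 : ℕ) ∧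
            ∀ x ∈ w, x = a ∨ x = b
        · obtain ⟨h1, h2, h3⟩ := hT
          have hlt2 : w.count b < mm + 1 := by have := q.2.isLt; omega
          rw [if_pos ⟨h1, h2, h3⟩]
          rw [Finset.sum_eq_single ((q.1, ⟨w.count b, hlt2⟩) : Fin (nn+1) × Fin (mm+1))]
          · have e1 : vvec a b nn mm w (q.1, ⟨w.count b, hlt2⟩) = 1 := by
              unfold vvec
              exact if_pos ⟨h1, rfl, h3⟩
            have e2 : repMu a b nn mm b (q.1, ⟨w.count b, hlt2⟩) q = 1 := by
              unfold repMu
              rw [if_neg (Ne.symm hab), if_pos rfl, if_pos ⟨h2.symm, rfl⟩]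
            rw [e1, e2]
            norm_num
          · intro p _ hne
            by_cases hv : w.count a = (p.1 : ℕ) ∧ w.count b = (p.2 : ℕ) ∧
                ∀ x ∈ w, x = a ∨ x = b
            · by_cases hd : (q.2 : ℕ) = (p.2 : ℕ) + 1 ∧ q.1 = p.1
              · exact absurd (show p = ((q.1, ⟨w.count b, hlt2⟩) : Fin (nn+1) × Fin (mm+1)) from
                  Prod.ext_iff.2 ⟨hd.2.symm, Fin.ext (by simpa using hv.2.1.symm)⟩) hne
              · have e2 : repMu a b nn mm b p q = 0 := by
                  unfold repMu
                  rw [if_neg (Ne.symm hab), if_pos rfl, if_neg hd]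
                rw [e2, mul_zero]
            · rw [vvec_apply_eq_zero hv, zero_mul]
          · intro h
            exact absurd (Finset.mem_univ _) h
        · rw [if_neg hT]
          apply Finset.sum_eq_zero
          intro p _
          by_cases hv : w.count a = (p.1 : ℕ) ∧ w.count b = (p.2 : ℕ) ∧
              ∀ x ∈ w, x = a ∨ x = b
          · by_cases hd : (q.2 : ℕ) = (p.2 : ℕ) + 1 ∧ q.1 = p.1
            · refine absurd ⟨?_, by omega, hv.2.2⟩ hT
              rw [hv.1, hd.2]
            · have e2 : repMu a b nn mm b p q = 0 := by
                unfold repMu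
                rw [if_neg (Ne.symm hab), if_pos rfl, if_neg hd]
              rw [e2, mul_zero]
          · rw [vvec_apply_eq_zero hv, zero_mul]
      · have hz : repMu a b nn mm c = fun _ _ => 0 := by
          funext p q
          simp [repMu, hca, hcb]
        have hrhs : vvec a b nn mm (w ++ [c]) q = 0 := by
          unfold vvec
          rw [if_neg]
          rintro ⟨-, -, h3⟩
          rcases h3 c (by simp) with h | h
          · exact hca h
          · exact hcb h
        rw [hrhs, hz]
        simp

end Upper

lemma wordMat_append {A : Type*} {d : ℕ} (μ : A → Matrix (Fin d) (Fin d) ℚ)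
    (u v : List A) : wordMat μ (u ++ v) = wordMat μ u * wordMat μ v := by
  unfold wordMat
  rw [List.map_append, List.prod_append]

lemma hasRep_of_index {A : Type*} (S : List A → ℚ) {ι : Type} [Fintype ι]
    [DecidableEq ι] (lam : ι → ℚ) (μ : A → Matrix ι ι ℚ) (gam : ι → ℚ)
    (h : ∀ w, S w = lam ⬝ᵥ ((w.map μ).prod *ᵥ gam)) : hasRep S (Fintype.card ι) := by
  let e := Fintype.equivFin ι
  let f := Matrix.reindexAlgEquiv ℚ ℚ e
  refine ⟨fun k => lam (e.symm k), fun c => f (μ c), fun k => gam (e.symm k), fun w => ?_⟩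
  rw [h w]
  set P := (w.map μ).prod with hP
  have hM : wordMat (fun c => f (μ c)) w = f P := by
    unfold wordMat
    rw [show w.map (fun c => f (μ c)) = (w.map μ).map (fun M => f M) from
      List.map_map.symm]
    exact (map_list_prod (f : Matrix ι ι ℚ ≃* Matrix (Fin (Fintype.card ι)) (Fin (Fintype.card ι)) ℚ) _).symm
  rw [hM]
  have hfP : ∀ k l, (f P) k l = P (e.symm k) (e.symm l) := by
    intro k l
    simp [f, Matrix.reindexAlgEquiv_apply, Matrix.reindex_apply, Matrix.submatrix_apply]
  have hv : ∀ k, ((f P) *ᵥ fun l => gam (e.symm l)) k = (P *ᵥ gam) (e.symm k) := by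
    intro k
    show ∑ l, (f P) k l * gam (e.symm l) = ∑ j, P (e.symm k) j * gam j
    rw [← Equiv.sum_comp e.symm (fun j => P (e.symm k) j * gam j)]
    exact Finset.sum_congr rfl fun l _ => by rw [hfP]
  show ∑ i, lam i * (P *ᵥ gam) i = ∑ k, lam (e.symm k) * ((f P) *ᵥ fun l => gam (e.symm l)) k
  rw [← Equiv.sum_comp e.symm (fun i => lam i * (P *ᵥ gam) i)]
  exact Finset.sum_congr rfl fun k _ => by rw [hv]

lemma upper_rep {A : Type*} [DecidableEq A] {a b : A} (hab : a ≠ b) (nn mm : ℕ) :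
    hasRep (shuffleSer (charSer (List.replicate nn a)) (charSer (List.replicate mm b)))
      ((nn + 1) * (mm + 1)) := by
  have hcard : Fintype.card (Fin (nn+1) × Fin (mm+1)) = (nn + 1) * (mm + 1) := by simp
  rw [← hcard]
  set qlast : Fin (nn+1) × Fin (mm+1) :=
    (⟨nn, Nat.lt_succ_self nn⟩, ⟨mm, Nat.lt_succ_self mm⟩) with hq
  apply hasRep_of_index _ (vvec a b nn mm []) (repMu a b nn mm)
    (fun q => if q = qlast then 1 else 0)
  intro w
  rw [shuffleChar hab, Matrix.dotProduct_mulVec, key_upper hab]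
  have : (vvec a b nn mm w ⬝ᵥ fun q => if q = qlast then (1:ℚ) else 0)
      = vvec a b nn mm w qlast := by
    simp [dotProduct, mul_ite, mul_one, mul_zero, Finset.sum_ite_eq']
  rw [this]
  rfl

lemma lower_bound {A : Type*} [DecidableEq A] {a b : A} (hab : a ≠ b) (n m : ℕ)
    (hn : 1 ≤ n) (hm : 1 ≤ m) (d : ℕ)
    (hrep : hasRep (shuffleSer (charSer (List.replicate (n-1) a))
      (charSer (List.replicate (m-1) b))) d) :
    n * m ≤ d := by
  obtain ⟨lam, μ, gam, h⟩ := hrep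
  set X : Matrix (Fin n × Fin m) (Fin d) ℚ :=
    fun p k => (lam ᵥ* wordMat μ (List.replicate p.1 a ++ List.replicate p.2 b)) k with hX
  set Y : Matrix (Fin d) (Fin n × Fin m) ℚ :=
    fun k p => (wordMat μ (List.replicate (n-1-p.1) a ++ List.replicate (m-1-p.2) b) *ᵥ gam) k
    with hY
  have hXY : X * Y = (1 : Matrix (Fin n × Fin m) (Fin n × Fin m) ℚ) := by
    ext p q
    rw [Matrix.mul_apply]
    set u := List.replicate (p.1 : ℕ) a ++ List.replicate (p.2 : ℕ) b with hu
    set v := List.replicate (n-1-(q.1 : ℕ)) a ++ List.replicate (m-1-(q.2 : ℕ)) b with hv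
    have step : ∑ k, X p k * Y k q = (lam ᵥ* wordMat μ u) ⬝ᵥ (wordMat μ v *ᵥ gam) := rfl
    rw [step, ← Matrix.dotProduct_mulVec, Matrix.mulVec_mulVec, ← wordMat_append, ← h,
      shuffleChar hab]
    have hca : (u ++ v).count a = (p.1 : ℕ) + (n-1-(q.1 : ℕ)) := by
      simp [hu, hv, List.count_append, List.count_replicate, hab, hab.symm]
    have hcb : (u ++ v).count b = (p.2 : ℕ) + (m-1-(q.2 : ℕ)) := by
      simp [hu, hv, List.count_append, List.count_replicate, hab, hab.symm]
    have hob : ∀ x ∈ u ++ v, x = a ∨ x = b := by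
      intro x hx
      simp only [hu, hv, List.mem_append, List.mem_replicate] at hx
      tauto
    rw [Matrix.one_apply]
    apply if_congr _ rfl rfl
    rw [hca, hcb, Prod.ext_iff]
    constructor
    · rintro ⟨e1, e2, -⟩
      have b1 := p.1.isLt
      have b2 := q.1.isLt
      have b3 := p.2.isLt
      have b4 := q.2.isLt
      exact ⟨Fin.ext (by omega), Fin.ext (by omega)⟩
    · rintro ⟨e1, e2⟩
      rw [e1, e2]
      have b2 := q.1.isLt
      have b4 := q.2.isLt
      exact ⟨by omega, by omega, hob⟩
  calc n * m = Fintype.card (Fin n × Fin m) := by simp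
    _ = (1 : Matrix (Fin n × Fin m) (Fin n × Fin m) ℚ).rank := Matrix.rank_one.symm
    _ = (X * Y).rank := by rw [hXY]
    _ ≤ X.rank := Matrix.rank_mul_le_left X Y
    _ ≤ Fintype.card (Fin d) := Matrix.rank_le_card_width X
    _ = d := by simp


/-- For distinct letters `a ≠ b`: (1) the rank of
`(a^{n-1})̲ ⧢ (b^{m-1})̲` is exactly `nm`, so the bound `nm` for the shuffle is sharp;
(2) `(a^n)̲ ↑ (b^m)̲ = (a^n)̲ ⧢ (b^m)̲`, so the bound `nm` is sharp for the
infiltration product as well. -/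
theorem stmt_11 {A : Type*} [Fintype A] [DecidableEq A] (a b : A) (hab : a ≠ b) :
    (∀ n m : ℕ, 1 ≤ n → 1 ≤ m →
      rankSer (shuffleSer (charSer (List.replicate (n - 1) a))
        (charSer (List.replicate (m - 1) b))) = n * m) ∧
    (∀ n m : ℕ,
      inflSer (charSer (List.replicate n a)) (charSer (List.replicate m b))
        = shuffleSer (charSer (List.replicate n a)) (charSer (List.replicate m b))) := by
  constructor
  · intro n m hn hm
    have hup := upper_rep hab (n-1) (m-1)
    have e1 : n - 1 + 1 = n := Nat.succ_pred_eq_of_pos hn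
    have e2 : m - 1 + 1 = m := Nat.succ_pred_eq_of_pos hm
    rw [e1, e2] at hup
    unfold rankSer
    apply le_antisymm
    · exact Nat.sInf_le hup
    · exact le_csInf ⟨_, hup⟩ (fun d hd => lower_bound hab n m hn hm d hd)
  · intro n m
    exact infl_eq_shuffle hab n m
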